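/- Let k be a field of characteristic zero and S := k[X₀,X₁,X₂]. Let F(t) = F₀ + t·H(t) ∈ S[[t]] be homogeneous of positive degree with F₀ ≠ 0, and let F₀ = ∏ᵢ Eᵢ^{eᵢ} be its factorization into distinct irreducibles. Then each partial derivative ∂ⱼ(F₀) is divisible in S by ∏ᵢ Eᵢ^{eᵢ−1}; writing Dⱼ := ∂ⱼ(F₀)/∏ᵢ Eᵢ^{eᵢ−1} and letting ∂(t) be the derivation over S[[t]] with coefficients the 2×2 minors of the rows (D₀,D₁,D₂) and (∂₀H(t), ∂₁H(t), ∂₂H(t)) (i.e. ∂(t) := det[(D₀,D₁,D₂); ∇H(t); ∇]), one has ∂(t)(F(t)) = 0. In particular the reduced F(t)-derivation ∂(t) is an F(t)-derivation. -/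

import Mathlib

open MvPolynomial

noncomputable section

/-- The partial derivative `∂/∂Xᵢ` on `S[[t]]`, acting coefficientwise in `t`. -/
def pdt {R : Type*} [CommRing R] (i : Fin 3) (f : PowerSeries (MvPolynomial (Fin 3) R)) :
    PowerSeries (MvPolynomial (Fin 3) R) :=
  PowerSeries.mk fun n => pderiv i (PowerSeries.coeff n f)

/-- The application to `f` of the derivation `det[(a₀,a₁,a₂);(b₀,b₁,b₂);∇]` of `S[[t]]`. -/
def detApp {R : Type*} [CommRing R] (a b : Fin 3 → PowerSeries (MvPolynomial (Fin 3) R))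
    (f : PowerSeries (MvPolynomial (Fin 3) R)) : PowerSeries (MvPolynomial (Fin 3) R) :=
  (a 1 * b 2 - a 2 * b 1) * pdt 0 f - (a 0 * b 2 - a 2 * b 0) * pdt 1 f
    + (a 0 * b 1 - a 1 * b 0) * pdt 2 f

/-!
The divisibility is the Leibniz rule applied to `F₀ = ∏ Eᵢ^{eᵢ}`.  Writing `P := ∏ Eᵢ^{eᵢ-1}`,
one has `∇F(t) = P·(D₀,D₁,D₂) + t·∇H(t)`, so `∂(t)(F(t))` is the determinant of a `3 × 3` matrix
whose last row is a linear combination of its first two rows, hence vanishes.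
-/

theorem Derivation.prod_pow_pred_dvd_prod_pow {R A : Type*} [CommSemiring R] [CommSemiring A]
    [Algebra R A] (δ : Derivation R A A) {ι : Type*} (s : Finset ι)
    (f : ι → A) (e : ι → ℕ) :
    (∏ i ∈ s, f i ^ (e i - 1)) ∣ δ (∏ i ∈ s, f i ^ e i) := by
  classical
  induction s using Finset.induction with
  | empty => simp
  | @insert a s ha ih =>
    rw [Finset.prod_insert ha, Finset.prod_insert ha, Derivation.leibniz, Derivation.leibniz_pow,
      smul_eq_mul, smul_eq_mul]
    have hprod : ∏ i ∈ s, f i ^ (e i - 1) ∣ ∏ i ∈ s, f i ^ e i :=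
      Finset.prod_dvd_prod_of_dvd _ _ fun i _ => pow_dvd_pow _ (Nat.sub_le _ _)
    refine dvd_add (mul_dvd_mul (pow_dvd_pow _ (Nat.sub_le _ _)) ih) ?_
    rw [mul_comm (f a ^ _)]
    refine mul_dvd_mul hprod ?_
    rw [nsmul_eq_mul, smul_eq_mul, mul_left_comm]
    exact dvd_mul_right _ _

theorem pdt_C_add_X_mul {R : Type*} [CommRing R] (j : Fin 3) (p : MvPolynomial (Fin 3) R)
    (f : PowerSeries (MvPolynomial (Fin 3) R)) :
    pdt j (PowerSeries.C p + PowerSeries.X * f)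
      = PowerSeries.C (pderiv j p) + PowerSeries.X * pdt j f := by
  ext n
  cases n with
  | zero => simp [pdt]
  | succ n => simp [pdt, PowerSeries.coeff_succ_X_mul, PowerSeries.coeff_C]

theorem detApp_eq_zero_of_pdt_eq_add {R : Type*} [CommRing R]
    {a b : Fin 3 → PowerSeries (MvPolynomial (Fin 3) R)} {f : PowerSeries (MvPolynomial (Fin 3) R)}
    (c u : PowerSeries (MvPolynomial (Fin 3) R)) (h : ∀ j, pdt j f = c * a j + u * b j) :
    detApp a b f = 0 := by
  rw [detApp, h 0, h 1, h 2]
  ring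

theorem reduced_derivation_kills_F_general {k : Type*} [Field k]
    (F₀ : MvPolynomial (Fin 3) k) (H : PowerSeries (MvPolynomial (Fin 3) k))
    (m : ℕ) (E : Fin m → MvPolynomial (Fin 3) k) (e : Fin m → ℕ)
    (hfact : F₀ = ∏ i, E i ^ e i) :
    (∀ j : Fin 3, (∏ i, E i ^ (e i - 1)) ∣ pderiv j F₀) ∧
    (∀ D : Fin 3 → MvPolynomial (Fin 3) k,
      (∀ j : Fin 3, pderiv j F₀ = (∏ i, E i ^ (e i - 1)) * D j) →
      detApp (fun j => PowerSeries.C (D j)) (fun j => pdt j H)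
          (PowerSeries.C F₀ + PowerSeries.X * H) = 0 ∧
      (PowerSeries.C F₀ + PowerSeries.X * H) ∣
        detApp (fun j => PowerSeries.C (D j)) (fun j => pdt j H)
          (PowerSeries.C F₀ + PowerSeries.X * H)) := by
  refine ⟨fun j => hfact ▸ (pderiv j).prod_pow_pred_dvd_prod_pow Finset.univ E e, fun D hD => ?_⟩
  have hzero : detApp (fun j => PowerSeries.C (D j)) (fun j => pdt j H)
      (PowerSeries.C F₀ + PowerSeries.X * H) = 0 :=
    detApp_eq_zero_of_pdt_eq_add (PowerSeries.C (∏ i, E i ^ (e i - 1))) PowerSeries.X fun j => by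
      rw [pdt_C_add_X_mul, hD j, map_mul]
  exact ⟨hzero, hzero ▸ dvd_zero _⟩

/-- Let `k` be a field of characteristic zero and `S := k[X₀,X₁,X₂]`.  Let
`F(t) = F₀ + t·H(t) ∈ S[[t]]` be homogeneous of positive degree with `F₀ ≠ 0` and factorization
`F₀ = ∏ᵢ Eᵢ^{eᵢ}` into distinct irreducibles.  Then each `∂ⱼ(F₀)` is divisible by
`∏ᵢ Eᵢ^{eᵢ−1}`, and, writing `Dⱼ := ∂ⱼ(F₀)/∏ᵢ Eᵢ^{eᵢ−1}`, the reduced `F(t)`-derivation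
`∂(t) := det[(D₀,D₁,D₂); ∇H(t); ∇]` satisfies `∂(t)(F(t)) = 0`; in particular `∂(t)` is an
`F(t)`-derivation. -/
theorem reduced_derivation_kills_F {k : Type*} [Field k] [CharZero k]
    (F₀ : MvPolynomial (Fin 3) k) (H : PowerSeries (MvPolynomial (Fin 3) k))
    (d : ℕ) (hd : 0 < d)
    (hFhom : ∀ n, (PowerSeries.coeff n
      (PowerSeries.C F₀ + PowerSeries.X * H)).IsHomogeneous d)
    (hF₀ : F₀ ≠ 0)
    (m : ℕ) (E : Fin m → MvPolynomial (Fin 3) k) (e : Fin m → ℕ)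
    (hirr : ∀ i, Irreducible (E i)) (hpos : ∀ i, 0 < e i)
    (hdist : ∀ i j, i ≠ j → ¬ Associated (E i) (E j))
    (hfact : F₀ = ∏ i, E i ^ e i) :
    (∀ j : Fin 3, (∏ i, E i ^ (e i - 1)) ∣ pderiv j F₀) ∧
    (∀ D : Fin 3 → MvPolynomial (Fin 3) k,
      (∀ j : Fin 3, pderiv j F₀ = (∏ i, E i ^ (e i - 1)) * D j) →
      detApp (fun j => PowerSeries.C (D j)) (fun j => pdt j H)
          (PowerSeries.C F₀ + PowerSeries.X * H) = 0 ∧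
      (PowerSeries.C F₀ + PowerSeries.X * H) ∣
        detApp (fun j => PowerSeries.C (D j)) (fun j => pdt j H)
          (PowerSeries.C F₀ + PowerSeries.X * H)) :=
  reduced_derivation_kills_F_general F₀ H m E e hfact
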